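/- Let $a > 0$, $k_p > a$, and $\Delta t \in \big(0, (1/a)\ln(k_p/(k_p-a))\big)$. Then $\big|\,k_p/a - ((k_p - a)/a)\, e^{a \Delta t}\,\big| \le e^{-(k_p - a)\,\Delta t}$. -/
import Mathlib

theorem stmt16 (a kp dt : ℝ) (ha : 0 < a) (hkp : a < kp) (hdt : 0 < dt)
    (hdt' : dt < (1 / a) * Real.log (kp / (kp - a))) :
    |kp / a - ((kp - a) / a) * Real.exp (a * dt)| ≤ Real.exp (-(kp - a) * dt) := by
  have hb : 0 < kp - a := by linarith
  have hlog : a * dt < Real.log (kp / (kp - a)) := by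
    have := (mul_lt_mul_iff_right₀ ha).2 hdt'
    rwa [mul_comm, ← mul_assoc, mul_one_div, div_self (ne_of_gt ha), one_mul, mul_comm] at this
  have hexp : Real.exp (a * dt) < kp / (kp - a) := by
    calc Real.exp (a * dt) < Real.exp (Real.log (kp / (kp - a))) := Real.exp_lt_exp.2 hlog
    _ = kp / (kp - a) := Real.exp_log (div_pos (lt_trans ha hkp) hb)
  have h2 : (kp - a) * Real.exp (a * dt) < kp := by
    rw [mul_comm]
    exact (lt_div_iff₀ hb).1 hexp
  have hnn : 0 ≤ kp / a - ((kp - a) / a) * Real.exp (a * dt) := by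
    rw [sub_nonneg, div_mul_eq_mul_div, div_le_div_iff₀ ha ha]
    nlinarith
  rw [abs_of_nonneg hnn]
  have e1 : a * dt + 1 ≤ Real.exp (a * dt) := Real.add_one_le_exp _
  have e2 : -(kp - a) * dt + 1 ≤ Real.exp (-(kp - a) * dt) := Real.add_one_le_exp _
  have key : kp - (kp - a) * Real.exp (a * dt) ≤ a * Real.exp (-(kp - a) * dt) := by
    nlinarith
  have : kp / a - ((kp - a) / a) * Real.exp (a * dt)
      = (kp - (kp - a) * Real.exp (a * dt)) / a := by ring
  rw [this, div_le_iff₀ ha]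
  linarith [key]
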